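/- Let G be a connected graph on vertex set {1,...,n} with n ≥ 2 and Φ = (F_1,...,F_n) where every F_i has an isolated vertex and |V(F_i)| ≥ 2. Then a set T is a minimal total dominating set of G[Φ] if and only if T is a minimal total dominating set of the subgraph induced by some G-layer of G[Φ]. In particular Γ_t(G) = Γ_t(G[Φ]) and: G[Φ] is well γ_t-dominated if and only if G is well γ_t-dominated. -/

import Mathlib

open scoped Classical

/-- A dominating set: every vertex is in `D` or adjacent to a vertex of `D`. -/
def isDominatingSet {V : Type*} (H : SimpleGraph V) (D : Finset V) : Prop :=
  ∀ v : V, v ∈ D ∨ ∃ u ∈ D, H.Adj u v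

/-- A total dominating set: every vertex has a neighbor in `D`. -/
def isTotalDominatingSet {V : Type*} (H : SimpleGraph V) (D : Finset V) : Prop :=
  ∀ v : V, ∃ u ∈ D, H.Adj u v

def isMinimalDominatingSet {V : Type*} (H : SimpleGraph V) (D : Finset V) : Prop :=
  isDominatingSet H D ∧ ∀ D' : Finset V, D' ⊂ D → ¬ isDominatingSet H D'

def isMinimalTotalDominatingSet {V : Type*} (H : SimpleGraph V) (D : Finset V) : Prop :=
  isTotalDominatingSet H D ∧ ∀ D' : Finset V, D' ⊂ D → ¬ isTotalDominatingSet H D'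

noncomputable def domNum {V : Type*} (H : SimpleGraph V) : ℕ :=
  sInf {k | ∃ D : Finset V, isDominatingSet H D ∧ D.card = k}

noncomputable def totalDomNum {V : Type*} (H : SimpleGraph V) : ℕ :=
  sInf {k | ∃ D : Finset V, isTotalDominatingSet H D ∧ D.card = k}

noncomputable def upperDomNum {V : Type*} (H : SimpleGraph V) : ℕ :=
  sSup {k | ∃ D : Finset V, isMinimalDominatingSet H D ∧ D.card = k}

noncomputable def upperTotalDomNum {V : Type*} (H : SimpleGraph V) : ℕ :=
  sSup {k | ∃ D : Finset V, isMinimalTotalDominatingSet H D ∧ D.card = k}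

/-- Well (γ-)dominated: all minimal dominating sets have the same size. -/
def WellDominated {V : Type*} (H : SimpleGraph V) : Prop :=
  ∀ D₁ D₂ : Finset V, isMinimalDominatingSet H D₁ → isMinimalDominatingSet H D₂ →
    D₁.card = D₂.card

/-- Well γ_t-dominated: all minimal total dominating sets have the same size. -/
def WellTotalDominated {V : Type*} (H : SimpleGraph V) : Prop :=
  ∀ D₁ D₂ : Finset V, isMinimalTotalDominatingSet H D₁ → isMinimalTotalDominatingSet H D₂ →
    D₁.card = D₂.card

/-- Restrained dominating set: dominating and every vertex outside `D` has a
neighbor outside `D`. -/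
def isRestrainedDominatingSet {V : Type*} (H : SimpleGraph V) (D : Finset V) : Prop :=
  isDominatingSet H D ∧ ∀ v ∉ D, ∃ u ∉ D, H.Adj u v

/-- Outer-connected dominating set: dominating and the subgraph induced by the
complement of `D` is connected. -/
def isOuterConnectedDominatingSet {V : Type*} (H : SimpleGraph V) (D : Finset V) : Prop :=
  isDominatingSet H D ∧ (H.induce ((↑D : Set V)ᶜ)).Connected

def isTotalRestrainedDominatingSet {V : Type*} (H : SimpleGraph V) (D : Finset V) : Prop :=
  isTotalDominatingSet H D ∧ ∀ v ∉ D, ∃ u ∉ D, H.Adj u v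

def isTotalOuterConnectedDominatingSet {V : Type*} (H : SimpleGraph V) (D : Finset V) : Prop :=
  isTotalDominatingSet H D ∧ (H.induce ((↑D : Set V)ᶜ)).Connected

noncomputable def restrainedDomNum {V : Type*} (H : SimpleGraph V) : ℕ :=
  sInf {k | ∃ D : Finset V, isRestrainedDominatingSet H D ∧ D.card = k}

noncomputable def ocDomNum {V : Type*} (H : SimpleGraph V) : ℕ :=
  sInf {k | ∃ D : Finset V, isOuterConnectedDominatingSet H D ∧ D.card = k}

noncomputable def totalRestrainedDomNum {V : Type*} (H : SimpleGraph V) : ℕ :=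
  sInf {k | ∃ D : Finset V, isTotalRestrainedDominatingSet H D ∧ D.card = k}

noncomputable def totalOcDomNum {V : Type*} (H : SimpleGraph V) : ℕ :=
  sInf {k | ∃ D : Finset V, isTotalOuterConnectedDominatingSet H D ∧ D.card = k}

/-- Paired dominating set: dominating and the induced subgraph on `D` has a
perfect matching. -/
def isPairedDominatingSet {V : Type*} (H : SimpleGraph V) (D : Finset V) : Prop :=
  isDominatingSet H D ∧
    ∃ M : SimpleGraph.Subgraph (H.induce (↑D : Set V)), M.IsPerfectMatching

noncomputable def pairedDomNum {V : Type*} (H : SimpleGraph V) : ℕ :=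
  sInf {k | ∃ D : Finset V, isPairedDominatingSet H D ∧ D.card = k}

def isIndependentSet {V : Type*} (H : SimpleGraph V) (D : Finset V) : Prop :=
  ∀ u ∈ D, ∀ v ∈ D, ¬ H.Adj u v

def isMaximalIndependentSet {V : Type*} (H : SimpleGraph V) (D : Finset V) : Prop :=
  isIndependentSet H D ∧ ∀ D' : Finset V, D ⊂ D' → ¬ isIndependentSet H D'

/-- The independent domination number `i(H)`. -/
noncomputable def indepDomNum {V : Type*} (H : SimpleGraph V) : ℕ :=
  sInf {k | ∃ D : Finset V, isMaximalIndependentSet H D ∧ D.card = k}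

/-- The independence number `β₀(H)`. -/
noncomputable def indepNum {V : Type*} (H : SimpleGraph V) : ℕ :=
  sSup {k | ∃ D : Finset V, isIndependentSet H D ∧ D.card = k}

/-- An efficient dominating set: every vertex is dominated by exactly one
member of `D`. -/
def isEfficientDominatingSet {V : Type*} (H : SimpleGraph V) (D : Finset V) : Prop :=
  ∀ v : V, ∃! u : V, u ∈ D ∧ (u = v ∨ H.Adj u v)

/-- The generalized lexicographic product `G[Φ]` of a graph `G` on `Fin n` and a
family `Φ = (F 0, …, F (n-1))` of pairwise disjoint graphs: the `F i` are induced
subgraphs, and vertices in distinct `F i`, `F j` are adjacent iff `i j ∈ E(G)`. -/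
def GLP {n : ℕ} (G : SimpleGraph (Fin n)) {V : Fin n → Type*}
    (F : ∀ i, SimpleGraph (V i)) : SimpleGraph (Σ i, V i) where
  Adj x y := (x.1 ≠ y.1 ∧ G.Adj x.1 y.1) ∨ ∃ h : x.1 = y.1, (F y.1).Adj (h ▸ x.2) y.2
  symm := by
    refine ⟨?_⟩
    rintro ⟨i, a⟩ ⟨j, b⟩ (⟨hne, hadj⟩ | ⟨h, hadj⟩)
    · exact Or.inl ⟨fun hh => hne hh.symm, hadj.symm⟩
    · dsimp only at h
      subst h
      exact Or.inr ⟨rfl, hadj.symm⟩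
  loopless := by
    refine ⟨?_⟩
    rintro ⟨i, a⟩ (⟨hne, _⟩ | ⟨h, hadj⟩)
    · exact hne rfl
    · exact (F i).loopless.irrefl a hadj

/-- The number of vertices of `D ∩ V(F i)`. -/
noncomputable def layerCount {n : ℕ} {V : Fin n → Type*} [∀ i, Fintype (V i)]
    (D : Finset (Σ i, V i)) (i : Fin n) : ℕ :=
  (D.filter (fun x => x.1 = i)).card

/-!
Because every `F i` has an isolated vertex `a`, the vertex `⟨i, a⟩` of `G[Φ]` can only be
dominated from another fibre; hence `T` totally dominates `G[Φ]` exactly when its shadow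
`T.image Sigma.fst` totally dominates `G`. A minimal `T` meets each fibre at most once (two
vertices in one fibre have the same shadow, so one of them is redundant), so `T` is the image
of its shadow under a section `i ↦ ⟨i, u i⟩`, and minimality transfers along this bijection.
-/

open Finset

namespace isTotalDominatingSet

variable {W : Type*} {H : SimpleGraph W} {D D' : Finset W}

lemma mono (hD : isTotalDominatingSet H D) (h : D ⊆ D') : isTotalDominatingSet H D' :=
  fun v => let ⟨u, hu, hadj⟩ := hD v; ⟨u, h hu, hadj⟩

end isTotalDominatingSet

def minTotalDomSizes {W : Type*} (H : SimpleGraph W) : Set ℕ :=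
  {k | ∃ D : Finset W, isMinimalTotalDominatingSet H D ∧ D.card = k}

lemma upperTotalDomNum_eq_sSup {W : Type*} (H : SimpleGraph W) :
    upperTotalDomNum H = sSup (minTotalDomSizes H) :=
  rfl

lemma wellTotalDominated_iff_subsingleton {W : Type*} (H : SimpleGraph W) :
    WellTotalDominated H ↔ (minTotalDomSizes H).Subsingleton := by
  constructor
  · rintro h _ ⟨D₁, h₁, rfl⟩ _ ⟨D₂, h₂, rfl⟩
    exact h D₁ D₂ h₁ h₂
  · intro h D₁ D₂ h₁ h₂
    exact h ⟨D₁, h₁, rfl⟩ ⟨D₂, h₂, rfl⟩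

section Sigma

variable {ι : Type*} {V : ι → Type*}

lemma sigma_mk_section_injective (u : ∀ i, V i) :
    Function.Injective (fun i => (⟨i, u i⟩ : Σ i, V i)) :=
  fun _ _ h => congrArg Sigma.fst h

lemma image_fst_image_sigma_mk_section [DecidableEq ι] (u : ∀ i, V i) (S : Finset ι) :
    (S.image fun i => (⟨i, u i⟩ : Σ i, V i)).image Sigma.fst = S := by
  rw [image_image]
  exact image_id

lemma exists_section_eq_image_of_injOn_fst [DecidableEq ι] [∀ i, Nonempty (V i)]
    {T : Finset (Σ i, V i)} (hT : Set.InjOn Sigma.fst (T : Set (Σ i, V i))) :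
    ∃ u : ∀ i, V i, T = (T.image Sigma.fst).image fun i => (⟨i, u i⟩ : Σ i, V i) := by
  have hfibre : ∀ i, ∃ v : V i, ∀ x ∈ T, x.1 = i → x = ⟨i, v⟩ := by
    intro i
    by_cases h : ∃ x ∈ T, x.1 = i
    · obtain ⟨x, hx, rfl⟩ := h
      exact ⟨x.2, fun y hy hyx => hT hy hx hyx⟩
    · exact ⟨Classical.arbitrary _, fun x hx hxi => (h ⟨x, hx, hxi⟩).elim⟩
  choose u hu using hfibre
  refine ⟨u, Finset.ext fun z => ⟨fun hz => ?_, ?_⟩⟩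
  · rw [hu z.1 z hz rfl]
    exact mem_image_of_mem _ (mem_image_of_mem _ hz)
  · simp only [image_image, mem_image, Function.comp_apply]
    rintro ⟨x, hx, rfl⟩
    rwa [← hu x.1 x hx rfl]

end Sigma

section GLP

variable {n : ℕ} {V : Fin n → Type*} {G : SimpleGraph (Fin n)} {F : ∀ i, SimpleGraph (V i)}

lemma isTotalDominatingSet_GLP_of_image_fst {T : Finset (Σ i, V i)}
    (hT : isTotalDominatingSet G (T.image Sigma.fst)) : isTotalDominatingSet (GLP G F) T := by
  intro v
  obtain ⟨_, hj, hadj⟩ := hT v.1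
  obtain ⟨x, hx, rfl⟩ := mem_image.mp hj
  exact ⟨x, hx, Or.inl ⟨G.ne_of_adj hadj, hadj⟩⟩

lemma isTotalDominatingSet_GLP_iff (hiso : ∀ i, ∃ a : V i, ∀ b : V i, ¬ (F i).Adj a b)
    (T : Finset (Σ i, V i)) :
    isTotalDominatingSet (GLP G F) T ↔ isTotalDominatingSet G (T.image Sigma.fst) := by
  refine ⟨fun hT i => ?_, isTotalDominatingSet_GLP_of_image_fst⟩
  obtain ⟨a, ha⟩ := hiso i
  obtain ⟨x, hx, (⟨-, hadj⟩ | ⟨_, hadj⟩)⟩ := hT ⟨i, a⟩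
  · exact ⟨x.1, mem_image_of_mem _ hx, hadj⟩
  · exact (ha _ hadj.symm).elim

lemma isMinimalTotalDominatingSet.injOn_fst_of_GLP
    (hiso : ∀ i, ∃ a : V i, ∀ b : V i, ¬ (F i).Adj a b) {T : Finset (Σ i, V i)}
    (hT : isMinimalTotalDominatingSet (GLP G F) T) :
    Set.InjOn Sigma.fst (T : Set (Σ i, V i)) := by
  intro x hx y hy hxy
  by_contra hne
  apply hT.2 (T.erase x) (erase_ssubset hx)
  rw [isTotalDominatingSet_GLP_iff hiso]
  -- erasing `x` does not change the shadow, since `y ≠ x` lies in the same fibre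
  refine ((isTotalDominatingSet_GLP_iff hiso T).mp hT.1).mono fun i hi => ?_
  obtain ⟨z, hz, rfl⟩ := mem_image.mp hi
  by_cases hzx : z = x
  · subst hzx
    exact mem_image.mpr ⟨y, mem_erase.mpr ⟨Ne.symm hne, hy⟩, hxy.symm⟩
  · exact mem_image_of_mem _ (mem_erase.mpr ⟨hzx, hz⟩)

lemma isMinimalTotalDominatingSet_GLP_iff
    (hiso : ∀ i, ∃ a : V i, ∀ b : V i, ¬ (F i).Adj a b) (T : Finset (Σ i, V i)) :
    isMinimalTotalDominatingSet (GLP G F) T ↔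
      ∃ (u : ∀ i, V i) (S : Finset (Fin n)),
        isMinimalTotalDominatingSet G S ∧ T = S.image fun i => (⟨i, u i⟩ : Σ i, V i) := by
  have : ∀ i, Nonempty (V i) := fun i => ⟨(hiso i).choose⟩
  constructor
  · intro hT
    obtain ⟨u, hu⟩ := exists_section_eq_image_of_injOn_fst (hT.injOn_fst_of_GLP hiso)
    refine ⟨u, T.image Sigma.fst, ⟨(isTotalDominatingSet_GLP_iff hiso T).mp hT.1, ?_⟩, hu⟩
    intro S' hS' hS'tds
    refine hT.2 (S'.image fun i => ⟨i, u i⟩) ?_ (isTotalDominatingSet_GLP_of_image_fst ?_)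
    · rw [hu]
      exact (image_ssubset_image (sigma_mk_section_injective u)).mpr hS'
    · rwa [image_fst_image_sigma_mk_section]
  · rintro ⟨u, S, ⟨hStds, hSmin⟩, rfl⟩
    refine ⟨isTotalDominatingSet_GLP_of_image_fst ?_, fun T' hT' hT'tds => ?_⟩
    · rwa [image_fst_image_sigma_mk_section]
    obtain ⟨S', -, rfl⟩ := subset_image_iff.mp hT'.subset
    refine hSmin S' ((image_ssubset_image (sigma_mk_section_injective u)).mp hT') ?_
    rwa [isTotalDominatingSet_GLP_iff hiso, image_fst_image_sigma_mk_section] at hT'tds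

lemma minTotalDomSizes_GLP (hiso : ∀ i, ∃ a : V i, ∀ b : V i, ¬ (F i).Adj a b) :
    minTotalDomSizes (GLP G F) = minTotalDomSizes G := by
  ext k
  constructor
  · rintro ⟨T, hT, rfl⟩
    obtain ⟨u, S, hS, rfl⟩ := (isMinimalTotalDominatingSet_GLP_iff hiso T).mp hT
    exact ⟨S, hS, (card_image_of_injective _ (sigma_mk_section_injective u)).symm⟩
  · rintro ⟨S, hS, rfl⟩
    let u : ∀ i, V i := fun i => (hiso i).choose
    exact ⟨S.image fun i => ⟨i, u i⟩,
      (isMinimalTotalDominatingSet_GLP_iff hiso _).mpr ⟨u, S, hS, rfl⟩,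
      card_image_of_injective _ (sigma_mk_section_injective u)⟩

end GLP

theorem stmt_17_general {n : ℕ} (G : SimpleGraph (Fin n))
    (V : Fin n → Type) (F : ∀ i, SimpleGraph (V i))
    (hiso : ∀ i, ∃ a : V i, ∀ b : V i, ¬ (F i).Adj a b) :
    (∀ T : Finset (Σ i, V i),
      isMinimalTotalDominatingSet (GLP G F) T ↔
        ∃ (u : ∀ i, V i) (S : Finset (Fin n)),
          isMinimalTotalDominatingSet G S ∧
          T = S.image (fun i => (⟨i, u i⟩ : Σ i, V i))) ∧
    upperTotalDomNum G = upperTotalDomNum (GLP G F) ∧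
    (WellTotalDominated (GLP G F) ↔ WellTotalDominated G) := by
  refine ⟨isMinimalTotalDominatingSet_GLP_iff hiso, ?_, ?_⟩
  · rw [upperTotalDomNum_eq_sSup, upperTotalDomNum_eq_sSup, minTotalDomSizes_GLP hiso]
  · rw [wellTotalDominated_iff_subsingleton, wellTotalDominated_iff_subsingleton,
      minTotalDomSizes_GLP hiso]

/-- If every `F i` has an isolated vertex and `|V(F i)| ≥ 2`, then `T` is a
minimal total dominating set of `G[Φ]` iff `T` is (via the canonical
isomorphism) a minimal total dominating set of some `G`-layer; in particular
`Γ_t(G) = Γ_t(G[Φ])` and `G[Φ]` is well `γ_t`-dominated iff `G` is. -/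
theorem stmt_17 {n : ℕ} (hn : 2 ≤ n) (G : SimpleGraph (Fin n)) (hG : G.Connected)
    (V : Fin n → Type) [∀ i, Fintype (V i)] (F : ∀ i, SimpleGraph (V i))
    (hiso : ∀ i, ∃ a : V i, ∀ b : V i, ¬ (F i).Adj a b)
    (hV : ∀ i, 2 ≤ Fintype.card (V i)) :
    (∀ T : Finset (Σ i, V i),
      isMinimalTotalDominatingSet (GLP G F) T ↔
        ∃ (u : ∀ i, V i) (S : Finset (Fin n)),
          isMinimalTotalDominatingSet G S ∧
          T = S.image (fun i => (⟨i, u i⟩ : Σ i, V i))) ∧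
    upperTotalDomNum G = upperTotalDomNum (GLP G F) ∧
    (WellTotalDominated (GLP G F) ↔ WellTotalDominated G) :=
  stmt_17_general G V F hiso
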